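/- arXiv:1008.5105 — 4 statements merged into one kernel-verified Lean document; each statement's English description precedes it below -/
import Mathlib

section
/- If 𝒞 and 𝒟 are families of subsets of Ω with VC dimensions c and d respectively (both finite), then the VC dimension of 𝒞 ∪ 𝒟 is at most c + d + 1. -/
open Finset

/-- A finite set `A` is shattered by a family `C` of subsets of `Ω` if every
`B ⊆ A` can be carved out of `A` by a member of `C`. -/
def Shatters {Ω : Type*} (C : Set (Set Ω)) (A : Finset Ω) : Prop :=
  ∀ B ⊆ A, ∃ c ∈ C, (A : Set Ω) ∩ c = (B : Set Ω)

lemma sum_choose_lt (n c d : ℕ) (h : c + d + 2 ≤ n) :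
    (∑ i ∈ Iic c, n.choose i) + (∑ i ∈ Iic d, n.choose i) < 2 ^ n := by
  have hdn : d ≤ n := by omega
  have h1 : ∑ i ∈ Iic d, n.choose i = ∑ j ∈ Icc (n - d) n, n.choose j := by
    refine Finset.sum_nbij' (fun i => n - i) (fun j => n - j) ?_ ?_ ?_ ?_ ?_
    · intro i hi; simp only [mem_Iic] at hi; simp only [mem_Icc]; omega
    · intro j hj; simp only [mem_Icc] at hj; simp only [mem_Iic]; omega
    · intro i hi; simp only [mem_Iic] at hi; show n - (n - i) = i; omega
    · intro j hj; simp only [mem_Icc] at hj; show n - (n - j) = j; omega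
    · intro i hi; simp only [mem_Iic] at hi
      show n.choose i = n.choose (n - i)
      rw [Nat.choose_symm (by omega)]
  rw [h1, ← Finset.sum_union]
  · have hsub : Iic c ∪ Icc (n - d) n ⊆ (Iic n).erase (c + 1) := by
      intro x hx
      simp only [mem_union, mem_Iic, mem_Icc] at hx
      simp only [mem_erase, mem_Iic]
      omega
    calc ∑ j ∈ Iic c ∪ Icc (n - d) n, n.choose j
        ≤ ∑ j ∈ (Iic n).erase (c + 1), n.choose j :=
          Finset.sum_le_sum_of_subset hsub
      _ < ∑ j ∈ Iic n, n.choose j := by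
          refine Finset.sum_lt_sum_of_subset (Finset.erase_subset _ _) (i := c + 1) ?_ ?_ ?_ ?_
          · simp only [mem_Iic]; omega
          · simp
          · exact Nat.choose_pos (by omega)
          · intros; exact Nat.zero_le _
      _ = 2 ^ n := by
          rw [← Nat.sum_range_choose n]
          congr 1
          ext x; simp [Nat.lt_succ_iff]
  · rw [Finset.disjoint_left]
    intro x hx hx'
    simp only [mem_Iic] at hx; simp only [mem_Icc] at hx'
    omega

lemma trace_card_le {Ω : Type*} [DecidableEq Ω] (C : Set (Set Ω)) (c : ℕ)
    (hC : ∀ A : Finset Ω, Shatters C A → A.card ≤ c) (A : Finset Ω)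
    (𝒜 : Finset (Finset Ω))
    (h𝒜 : ∀ B ∈ 𝒜, B ⊆ A ∧ ∃ e ∈ C, (A : Set Ω) ∩ e = (B : Set Ω)) :
    #𝒜 ≤ ∑ i ∈ Iic c, (#A).choose i := by
  calc #𝒜 ≤ #𝒜.shatterer := Finset.card_le_card_shatterer 𝒜
    _ ≤ #((Iic c).biUnion (A.powersetCard)) := by
        apply Finset.card_le_card
        intro B hB
        rw [Finset.mem_shatterer] at hB
        -- B ⊆ A
        obtain ⟨u, hu𝒜, hBu⟩ := hB (Finset.Subset.refl B)
        have hBA : B ⊆ A := by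
          have := (h𝒜 u hu𝒜).1
          intro x hx
          have : x ∈ B ∩ u := by rw [hBu]; exact hx
          exact (h𝒜 u hu𝒜).1 (Finset.mem_inter.1 this).2
        -- C shatters B
        have hCB : Shatters C B := by
          intro t ht
          obtain ⟨u, hu𝒜, hBu⟩ := hB ht
          obtain ⟨hub, e, heC, hAe⟩ := h𝒜 u hu𝒜
          refine ⟨e, heC, ?_⟩
          rw [← hBu, Finset.coe_inter, ← hAe]
          ext x
          simp only [Set.mem_inter_iff, Finset.mem_coe]
          constructor
          · rintro ⟨hxB, hxe⟩; exact ⟨hxB, hBA hxB, hxe⟩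
          · rintro ⟨hxB, _, hxe⟩; exact ⟨hxB, hxe⟩
        have hcard : #B ≤ c := hC B hCB
        rw [Finset.mem_biUnion]
        exact ⟨#B, by simpa using hcard, Finset.mem_powersetCard.2 ⟨hBA, rfl⟩⟩
    _ ≤ ∑ i ∈ Iic c, #(A.powersetCard i) := Finset.card_biUnion_le
    _ = ∑ i ∈ Iic c, (#A).choose i := by
        apply Finset.sum_congr rfl
        intro i _
        rw [Finset.card_powersetCard]

/-- If `𝒞` and `𝒟` have VC dimensions at most `c` and `d`, then `𝒞 ∪ 𝒟` has
VC dimension at most `c + d + 1`. -/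
theorem vc_dim_union_le {Ω : Type*} (C D : Set (Set Ω)) (c d : ℕ)
    (hC : ∀ A : Finset Ω, Shatters C A → A.card ≤ c)
    (hD : ∀ A : Finset Ω, Shatters D A → A.card ≤ d) :
    ∀ A : Finset Ω, Shatters (C ∪ D) A → A.card ≤ c + d + 1 := by
  classical
  intro A hA
  by_contra hlt
  push_neg at hlt
  set 𝒜 : Finset (Finset Ω) :=
    A.powerset.filter (fun B => ∃ e ∈ C, (A : Set Ω) ∩ e = (B : Set Ω)) with h𝒜def
  set 𝒟 : Finset (Finset Ω) :=
    A.powerset.filter (fun B => ∃ e ∈ D, (A : Set Ω) ∩ e = (B : Set Ω)) with h𝒟def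
  have hcover : A.powerset ⊆ 𝒜 ∪ 𝒟 := by
    intro B hB
    have hBA : B ⊆ A := Finset.mem_powerset.1 hB
    obtain ⟨e, he, hAe⟩ := hA B hBA
    rcases he with he | he
    · exact Finset.mem_union_left _ (Finset.mem_filter.2 ⟨hB, e, he, hAe⟩)
    · exact Finset.mem_union_right _ (Finset.mem_filter.2 ⟨hB, e, he, hAe⟩)
  have hpow : 2 ^ #A ≤ #𝒜 + #𝒟 := by
    calc 2 ^ #A = #A.powerset := (Finset.card_powerset A).symm
      _ ≤ #(𝒜 ∪ 𝒟) := Finset.card_le_card hcover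
      _ ≤ #𝒜 + #𝒟 := Finset.card_union_le _ _
  have h1 : #𝒜 ≤ ∑ i ∈ Iic c, (#A).choose i := by
    apply trace_card_le C c hC A
    intro B hB
    rw [h𝒜def, Finset.mem_filter, Finset.mem_powerset] at hB
    exact hB
  have h2 : #𝒟 ≤ ∑ i ∈ Iic d, (#A).choose i := by
    apply trace_card_le D d hD A
    intro B hB
    rw [h𝒟def, Finset.mem_filter, Finset.mem_powerset] at hB
    exact hB
  have := sum_choose_lt (#A) c d (by omega)
  omega
end

section
/- Let Ω_d be a sequence of metric probability spaces whose concentration functions satisfy α_d(ε) ≤ exp(-a·ε²·d) for constants a > 0, with median pairwise distance normalized so that the median of ρ(x, ·) equals 1 + o(1) uniformly. Let X_d ⊆ Ω_d be i.i.d. samples of size n_d with log n_d = o(d). Then for each ε > 0, with probability tending to 1 as d → ∞, every pair of distinct datapoints x, y ∈ X_d satisfies |ρ(x, y) - 1| < ε. -/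
/-!
For a fixed point `z`, `ρ(z, ·)` is `1`-Lipschitz with median `R(z) = 1 + o(1)`, so gaussian
concentration bounds `μ {y | ε ≤ |ρ(y, z) - 1|}` by `2 exp(-a (ε/2)² d)` as soon as
`|R - 1| ≤ ε/2`. A union bound over the `n_d²` ordered pairs then bounds the probability of a
bad pair by `2 n_d² exp(-a (ε/2)² d)`, which tends to `0` because `log n_d = o(d)`.

The event that some pair is bad need not be measurable for the product σ-algebra (`Ω_d` is
not assumed separable), so the union bound is proved for its measurable subsets, by induction
on the sample size: given the other `N` points, the first one lies in a bad pair with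
probability at most `N β`, unless the other points already contain a bad pair.
-/

open MeasureTheory Filter
open scoped ENNReal Topology

lemma LipschitzWith.measure_le_abs_sub_median_le {Ω : Type*} [PseudoMetricSpace Ω]
    [MeasurableSpace Ω] [OpensMeasurableSpace Ω] {μ : Measure Ω} {δ : ℝ} {K : ℝ≥0∞}
    (hconc : ∀ A : Set Ω, MeasurableSet A → 1/2 ≤ μ A → μ (Metric.thickening δ A)ᶜ ≤ K)
    {f : Ω → ℝ} (hf : LipschitzWith 1 f) {M : ℝ}
    (hM₁ : 1/2 ≤ μ {y | M ≤ f y}) (hM₂ : 1/2 ≤ μ {y | f y ≤ M}) :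
    μ {y | δ ≤ |f y - M|} ≤ 2 * K := by
  have hdist : ∀ y z, |f y - f z| ≤ dist y z := fun y z => by
    simpa [Real.dist_eq] using hf.dist_le_mul y z
  have hup : {y | M + δ ≤ f y} ⊆ (Metric.thickening δ {y | f y ≤ M})ᶜ := by
    intro y hy hmem
    obtain ⟨z, hz, hyz⟩ := Metric.mem_thickening_iff.mp hmem
    linarith [(le_abs_self _).trans (hdist y z), hy.out, hz.out]
  have hdown : {y | f y ≤ M - δ} ⊆ (Metric.thickening δ {y | M ≤ f y})ᶜ := by
    intro y hy hmem
    obtain ⟨z, hz, hyz⟩ := Metric.mem_thickening_iff.mp hmem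
    linarith [(neg_le_abs _).trans (hdist y z), hy.out, hz.out]
  have hsplit : {y | δ ≤ |f y - M|} ⊆ {y | M + δ ≤ f y} ∪ {y | f y ≤ M - δ} := by
    intro y hy
    rcases le_abs'.mp hy.out with h | h
    · exact Or.inr (show f y ≤ M - δ by linarith)
    · exact Or.inl (show M + δ ≤ f y by linarith)
  have hclosed₁ : MeasurableSet {y | M ≤ f y} :=
    (isClosed_le continuous_const hf.continuous).measurableSet
  have hclosed₂ : MeasurableSet {y | f y ≤ M} :=
    (isClosed_le hf.continuous continuous_const).measurableSet
  calc μ {y | δ ≤ |f y - M|}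
      ≤ μ (Metric.thickening δ {y | f y ≤ M})ᶜ + μ (Metric.thickening δ {y | M ≤ f y})ᶜ :=
        (measure_mono (hsplit.trans (Set.union_subset_union hup hdown))).trans
          (measure_union_le _ _)
    _ ≤ K + K := add_le_add (hconc _ hclosed₂ hM₂) (hconc _ hclosed₁ hM₁)
    _ = 2 * K := (two_mul K).symm

lemma measure_le_abs_dist_sub_one_le {Ω : Type*} [PseudoMetricSpace Ω] [MeasurableSpace Ω]
    [OpensMeasurableSpace Ω] {μ : Measure Ω} {δ ε : ℝ} {K : ℝ≥0∞}
    (hconc : ∀ A : Set Ω, MeasurableSet A → 1/2 ≤ μ A → μ (Metric.thickening δ A)ᶜ ≤ K)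
    {z : Ω} {R : ℝ} (hR₁ : 1/2 ≤ μ {y | R ≤ dist z y}) (hR₂ : 1/2 ≤ μ {y | dist z y ≤ R})
    (hR : |R - 1| ≤ ε - δ) :
    μ {y | ε ≤ |dist y z - 1|} ≤ 2 * K := by
  refine (measure_mono fun y (hy : ε ≤ _) => ?_).trans
    ((LipschitzWith.dist_right z).measure_le_abs_sub_median_le hconc hR₁ hR₂)
  show δ ≤ |dist z y - R|
  rw [dist_comm] at hy
  have htriangle := abs_sub_abs_le_abs_sub (dist z y - 1) (R - 1)
  rw [sub_sub_sub_cancel_right] at htriangle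
  linarith

lemma lintegral_le_add_measure_lt {α : Type*} [MeasurableSpace α] {ν : Measure α}
    [IsProbabilityMeasure ν] {g : α → ℝ≥0∞} (hg : Measurable g) (hg₁ : ∀ w, g w ≤ 1)
    (c : ℝ≥0∞) : ∫⁻ w, g w ∂ν ≤ c + ν {w | c < g w} := by
  have hB : MeasurableSet {w | c < g w} := measurableSet_lt measurable_const hg
  calc ∫⁻ w, g w ∂ν ≤ ∫⁻ w, (c + {w | c < g w}.indicator 1 w) ∂ν := by
        refine lintegral_mono fun w => ?_
        by_cases hw : c < g w
        · simpa [Set.indicator_of_mem (show w ∈ {w | c < g w} from hw)] using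
            le_add_left (hg₁ w)
        · simpa [Set.indicator_of_notMem (show w ∉ {w | c < g w} from hw)] using hw
    _ = c + ν {w | c < g w} := by
        rw [lintegral_add_left measurable_const, lintegral_const, lintegral_indicator_one hB,
          measure_univ, mul_one]

lemma measurable_fin_cons {α : Type*} [MeasurableSpace α] {N : ℕ} :
    Measurable fun p : α × (Fin N → α) => (Fin.cons p.1 p.2 : Fin (N + 1) → α) := by
  refine measurable_pi_iff.2 fun i => ?_
  cases i using Fin.cases with
  | zero => simpa using measurable_fst
  | succ j => simpa using measurable_snd.eval (a := j)

lemma pi_apply_eq_lintegral_measure_setOf_cons_mem {α : Type*} [MeasurableSpace α]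
    (μ : Measure α) [SigmaFinite μ] {N : ℕ} {M : Set (Fin (N + 1) → α)} (hM : MeasurableSet M) :
    Measure.pi (fun _ => μ) M =
      ∫⁻ w, μ {y | Fin.cons y w ∈ M} ∂(Measure.pi fun _ : Fin N => μ) := by
  have e := (measurePreserving_piFinSuccAbove (fun _ : Fin (N + 1) => μ) 0).symm
  rw [← e.measure_preimage hM.nullMeasurableSet, Measure.prod_apply_symm (e.measurable hM)]
  simp only [MeasurableEquiv.piFinSuccAbove_symm_apply, Fin.insertNthEquiv_zero]
  rfl

def ExistsRelatedPair {α : Type*} {N : ℕ} (S : α → α → Prop) (x : Fin N → α) : Prop :=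
  ∃ i j, i ≠ j ∧ S (x i) (x j)

lemma ExistsRelatedPair.of_cons {α : Type*} {S : α → α → Prop} (hS : ∀ y z, S y z → S z y)
    {N : ℕ} {y : α} {w : Fin N → α} (h : ExistsRelatedPair S (Fin.cons y w : Fin (N + 1) → α)) :
    (∃ j, S y (w j)) ∨ ExistsRelatedPair S w := by
  obtain ⟨i, j, hij, hSij⟩ := h
  cases i using Fin.cases with
  | zero => cases j using Fin.cases with
    | zero => exact absurd rfl hij
    | succ j => exact Or.inl ⟨j, by simpa using hSij⟩
  | succ i => cases j using Fin.cases with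
    | zero => exact Or.inl ⟨i, hS _ _ (by simpa using hSij)⟩
    | succ j => exact Or.inr ⟨i, j, fun h => hij (h ▸ rfl), by simpa using hSij⟩

lemma one_sub_le_measure_of_forall_subset_compl {α : Type*} [MeasurableSpace α]
    {ν : Measure α} [IsProbabilityMeasure ν] {s : Set α} {b : ℝ≥0∞}
    (h : ∀ t, MeasurableSet t → t ⊆ sᶜ → ν t ≤ b) : 1 - b ≤ ν s := by
  rw [measure_eq_iInf]
  refine le_iInf fun t => le_iInf fun hst => le_iInf fun ht => ?_
  calc 1 - b ≤ 1 - ν tᶜ := tsub_le_tsub_left (h _ ht.compl (Set.compl_subset_compl.2 hst)) 1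
    _ = ν t := by
      rw [prob_compl_eq_one_sub ht, ENNReal.sub_sub_cancel ENNReal.one_ne_top prob_le_one]

section PairUnionBound

variable {α : Type*} [MeasurableSpace α] {μ : Measure α} {S : α → α → Prop} {β : ℝ≥0∞}

lemma measure_setOf_cons_mem_le (hβ : ∀ z, μ {y | S y z} ≤ β) {N : ℕ} {w : Fin N → α}
    {M : Set (Fin (N + 1) → α)} (hM : ∀ y, Fin.cons y w ∈ M → ∃ j, S y (w j)) :
    μ {y | Fin.cons y w ∈ M} ≤ N * β :=
  calc μ {y | Fin.cons y w ∈ M} ≤ μ (⋃ j, {y | S y (w j)}) :=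
        measure_mono fun y hy => Set.mem_iUnion.mpr (hM y hy)
    _ ≤ ∑ j, μ {y | S y (w j)} := measure_iUnion_fintype_le _ _
    _ ≤ ∑ _j : Fin N, β := Finset.sum_le_sum fun j _ => hβ (w j)
    _ = N * β := by simp

lemma pi_measure_le_of_subset_existsRelatedPair [IsProbabilityMeasure μ]
    (hS : ∀ y z, S y z → S z y) (hβ : ∀ z, μ {y | S y z} ≤ β) (N : ℕ) {M : Set (Fin N → α)}
    (hM : MeasurableSet M)
    (hMS : M ⊆ {x | ExistsRelatedPair S x}) :
    Measure.pi (fun _ => μ) M ≤ N ^ 2 * β := by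
  induction N with
  | zero =>
    have : M = ∅ := Set.eq_empty_of_forall_notMem fun x hx => by
      obtain ⟨i, -⟩ : ExistsRelatedPair S x := hMS hx
      exact i.elim0
    simp [this]
  | succ N ih =>
    set g : (Fin N → α) → ℝ≥0∞ := fun w => μ {y | Fin.cons y w ∈ M}
    have hg : Measurable g := measurable_measure_prodMk_right (measurable_fin_cons hM)
    have hbad : {w | (N : ℝ≥0∞) * β < g w} ⊆ {x | ExistsRelatedPair S x} := by
      intro w hw
      by_contra hgood
      refine hw.out.not_ge (measure_setOf_cons_mem_le hβ fun y hy => ?_)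
      exact (ExistsRelatedPair.of_cons hS (hMS hy)).resolve_right hgood
    calc Measure.pi (fun _ => μ) M = ∫⁻ w, g w ∂(Measure.pi fun _ => μ) :=
          pi_apply_eq_lintegral_measure_setOf_cons_mem μ hM
      _ ≤ N * β + Measure.pi (fun _ => μ) {w | (N : ℝ≥0∞) * β < g w} :=
          lintegral_le_add_measure_lt hg (fun _ => prob_le_one) _
      _ ≤ N * β + N ^ 2 * β :=
          add_le_add_right (ih (measurableSet_lt measurable_const hg) hbad) _
      _ ≤ (N + 1 : ℕ) ^ 2 * β := by
          rw [← add_mul]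
          gcongr
          norm_cast
          nlinarith

lemma one_sub_sq_mul_le_pi_measure_forall_not [IsProbabilityMeasure μ]
    (hS : ∀ y z, S y z → S z y) (hβ : ∀ z, μ {y | S y z} ≤ β) (N : ℕ) :
    1 - N ^ 2 * β ≤ Measure.pi (fun _ : Fin N => μ) {x | ∀ i j, i ≠ j → ¬ S (x i) (x j)} :=
  one_sub_le_measure_of_forall_subset_compl fun _ ht hts =>
    pi_measure_le_of_subset_existsRelatedPair hS hβ N ht fun _ hx => by
      simpa [ExistsRelatedPair] using hts hx

end PairUnionBound

lemma tendsto_natCast_sq_mul_exp_neg_mul_atTop {n : ℕ → ℕ}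
    (hn : Tendsto (fun d : ℕ => Real.log (n d) / d) atTop (𝓝 0)) {c : ℝ} (hc : 0 < c) :
    Tendsto (fun d : ℕ => (n d : ℝ) ^ 2 * Real.exp (-c * d)) atTop (𝓝 0) := by
  have hexponent : Tendsto (fun d : ℕ => (d : ℝ) * (2 * (Real.log (n d) / d) - c)) atTop atBot :=
    tendsto_natCast_atTop_atTop.atTop_mul_neg (neg_lt_zero.2 hc)
      (by simpa using (hn.const_mul 2).sub_const c)
  have hbound : ∀ d : ℕ, 1 ≤ d → (n d : ℝ) ^ 2 * Real.exp (-c * d) ≤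
      Real.exp ((d : ℝ) * (2 * (Real.log (n d) / d) - c)) := by
    intro d hd
    have hd₀ : (d : ℝ) ≠ 0 := by positivity
    calc (n d : ℝ) ^ 2 * Real.exp (-c * d)
        ≤ Real.exp (Real.log (n d)) ^ 2 * Real.exp (-c * d) := by
          gcongr; exact Real.le_exp_log _
      _ = _ := by rw [← Real.exp_nat_mul, ← Real.exp_add]; field_simp; ring_nf
  refine tendsto_of_tendsto_of_tendsto_of_le_of_le' tendsto_const_nhds
    (Real.tendsto_exp_atBot.comp hexponent) (Eventually.of_forall fun d => by positivity) ?_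
  filter_upwards [eventually_ge_atTop 1] with d hd using hbound d hd

theorem pairwise_distances_concentrate_general
    (Ω : ℕ → Type*) [∀ d, MetricSpace (Ω d)] [∀ d, MeasurableSpace (Ω d)]
    [∀ d, BorelSpace (Ω d)]
    (μ : ∀ d, Measure (Ω d)) [∀ d, IsProbabilityMeasure (μ d)]
    (a : ℝ) (ha : 0 < a)
    (hconc : ∀ d : ℕ, ∀ ε : ℝ, 0 < ε → ∀ A : Set (Ω d), MeasurableSet A →
      1/2 ≤ μ d A →
      μ d (Metric.thickening ε A)ᶜ ≤ ENNReal.ofReal (Real.exp (-a * ε ^ 2 * d)))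
    (R : ∀ d, Ω d → ℝ)
    (hmed1 : ∀ d x, 1/2 ≤ μ d {y | R d x ≤ dist x y})
    (hmed2 : ∀ d x, 1/2 ≤ μ d {y | dist x y ≤ R d x})
    (η : ℕ → ℝ) (hη : Tendsto η atTop (nhds 0))
    (hR : ∀ d x, |R d x - 1| ≤ η d)
    (n : ℕ → ℕ)
    (hn : Tendsto (fun d : ℕ => Real.log (n d) / d) atTop (nhds 0)) :
    ∀ ε : ℝ, 0 < ε →
      Tendsto
        (fun d : ℕ => (Measure.pi fun _ : Fin (n d) => μ d)
          {x | ∀ i j : Fin (n d), i ≠ j → |dist (x i) (x j) - 1| < ε})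
        atTop (nhds 1) := by
  intro ε hε
  set c := a * (ε / 2) ^ 2
  have hc : 0 < c := by positivity
  have hsection : ∀ᶠ d in atTop, ∀ z : Ω d,
      μ d {y | ε ≤ |dist y z - 1|} ≤ 2 * ENNReal.ofReal (Real.exp (-c * d)) := by
    filter_upwards [hη.eventually (ge_mem_nhds (half_pos hε))] with d hηd z
    refine measure_le_abs_dist_sub_one_le (δ := ε / 2) (fun A hA hμA => ?_) (hmed1 d z)
      (hmed2 d z) (by linarith [hR d z])
    simpa only [c, neg_mul] using hconc d (ε / 2) (half_pos hε) A hA hμA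
  have hgood : ∀ᶠ d in atTop,
      1 - ENNReal.ofReal ((n d : ℝ) ^ 2 * Real.exp (-c * d) * 2) ≤
        (Measure.pi fun _ : Fin (n d) => μ d)
          {x | ∀ i j : Fin (n d), i ≠ j → |dist (x i) (x j) - 1| < ε} := by
    filter_upwards [hsection] with d hd
    convert one_sub_sq_mul_le_pi_measure_forall_not (fun y z h => by rwa [dist_comm]) hd (n d)
      using 2
    · rw [ENNReal.ofReal_mul (by positivity), ENNReal.ofReal_mul (by positivity),
        ENNReal.ofReal_pow (by positivity), ENNReal.ofReal_natCast, ENNReal.ofReal_ofNat]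
      ring
    · simp only [not_le]
  have hlim : Tendsto (fun d : ℕ => 1 - ENNReal.ofReal ((n d : ℝ) ^ 2 * Real.exp (-c * d) * 2))
      atTop (𝓝 1) := by
    simpa using ENNReal.Tendsto.sub tendsto_const_nhds
      (ENNReal.tendsto_ofReal ((tendsto_natCast_sq_mul_exp_neg_mul_atTop hn hc).mul_const 2))
      (Or.inl ENNReal.one_ne_top)
  exact tendsto_of_tendsto_of_tendsto_of_le_of_le' hlim tendsto_const_nhds hgood
    (Eventually.of_forall fun _ => prob_le_one)

/-- Under gaussian concentration `α_d(ε) ≤ exp(-a ε² d)`, medians of distance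
functions uniformly `1 + o(1)`, and i.i.d. samples of size `n_d` with
`log n_d = o(d)`, for every `ε > 0` with probability tending to `1` all
pairwise distances between distinct datapoints lie within `ε` of `1`. -/
theorem pairwise_distances_concentrate
    (Ω : ℕ → Type*) [∀ d, MetricSpace (Ω d)] [∀ d, MeasurableSpace (Ω d)]
    [∀ d, BorelSpace (Ω d)]
    (μ : ∀ d, Measure (Ω d)) [∀ d, IsProbabilityMeasure (μ d)]
    (a : ℝ) (ha : 0 < a)
    (hconc : ∀ d : ℕ, ∀ ε : ℝ, 0 < ε → ∀ A : Set (Ω d), MeasurableSet A →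
      1/2 ≤ μ d A →
      μ d (Metric.thickening ε A)ᶜ ≤ ENNReal.ofReal (Real.exp (-a * ε ^ 2 * d)))
    (R : ∀ d, Ω d → ℝ)
    (hmed1 : ∀ d x, 1/2 ≤ μ d {y | R d x ≤ dist x y})
    (hmed2 : ∀ d x, 1/2 ≤ μ d {y | dist x y ≤ R d x})
    (η : ℕ → ℝ) (hη : Tendsto η atTop (nhds 0))
    (hR : ∀ d x, |R d x - 1| ≤ η d)
    (n : ℕ → ℕ) (hn1 : ∀ d, 1 ≤ n d)
    (hn : Tendsto (fun d : ℕ => Real.log (n d) / d) atTop (nhds 0)) :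
    ∀ ε : ℝ, 0 < ε →
      Tendsto
        (fun d : ℕ => (Measure.pi fun _ : Fin (n d) => μ d)
          {x | ∀ i j : Fin (n d), i ≠ j → |dist (x i) (x j) - 1| < ε})
        atTop (nhds 1) :=
  pairwise_distances_concentrate_general Ω μ a ha hconc R hmed1 hmed2 η hη hR n hn
end

section
/- (Empty space paradox, lower bound direction) In the setting of the previous assumptions (concentration functions α_d(ε) ≤ exp(-aε²d), medians R(ω) of ρ(ω,·) uniformly 1 + o(1), i.i.d. sample X of size n with log n = o(d)), for every ε > 0, with probability tending to 1 the set of query points ω ∈ Ω with dist(ω, X) ≤ 1 - ε has measure at most exp(-Ω(ε²d)). In particular the median nearest-neighbour distance ε_M satisfies liminf_d ε_M ≥ 1. -/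
/-!
If the median `R x` of `dist x ·` is close to `1`, the ball of radius `1 - ε` around `x` lies outside
the `ε/2`-thickening of `{y | R x ≤ dist x y}`, a set of measure `≥ 1/2`; gaussian concentration
gives that ball measure `≤ exp (-a ε² d / 4)`. A union bound over the `n` sample points costs a
factor `n = exp (o(d))`, which is absorbed by halving the exponent. The bound holds for every sample,
so its probability is eventually `1`.
-/

open MeasureTheory Filter Metric Topology

section Concentration

variable {α : Type*} [PseudoMetricSpace α]

theorem Metric.closedBall_subset_compl_thickening_setOf_le_dist (x : α) (r γ : ℝ) :
    closedBall x (r - γ) ⊆ (thickening γ {y | r ≤ dist x y})ᶜ := by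
  intro ω hω hthick
  obtain ⟨y, hy, hωy⟩ := mem_thickening_iff.mp hthick
  rw [mem_closedBall] at hω
  have hxy : dist x y ≤ dist ω x + dist ω y := dist_triangle_left x y ω
  have hyr : r ≤ dist x y := hy
  linarith [hωy]

variable [MeasurableSpace α] [OpensMeasurableSpace α]

theorem measure_closedBall_le_of_concentration (μ : Measure α) {γ : ℝ} {c : ENNReal}
    (hconc : ∀ A : Set α, MeasurableSet A → 1/2 ≤ μ A → μ (thickening γ A)ᶜ ≤ c)
    (x : α) {r : ℝ} (hmed : 1/2 ≤ μ {y | r ≤ dist x y}) :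
    μ (closedBall x (r - γ)) ≤ c := by
  have hmeas : MeasurableSet {y | r ≤ dist x y} :=
    (isClosed_le continuous_const (continuous_const.dist continuous_id)).measurableSet
  exact (measure_mono (closedBall_subset_compl_thickening_setOf_le_dist x r γ)).trans
    (hconc _ hmeas hmed)

end Concentration

section UnionBound

variable {α ι : Type*} [PseudoMetricSpace α]

theorem Metric.setOf_infDist_range_le_subset_iUnion_closedBall [Finite ι] [Nonempty ι]
    (x : ι → α) (s : ℝ) :
    {ω | infDist ω (Set.range x) ≤ s} ⊆ ⋃ i, closedBall (x i) s := by
  intro ω hω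
  obtain ⟨_, ⟨i, rfl⟩, hdist⟩ :=
    (Set.finite_range x).isCompact.exists_infDist_eq_dist (Set.range_nonempty x) ω
  exact Set.mem_iUnion.mpr ⟨i, by rw [mem_closedBall, ← hdist]; exact hω⟩

theorem measure_setOf_infDist_range_le_le [MeasurableSpace α] [Fintype ι] [Nonempty ι]
    (μ : Measure α) (x : ι → α) {s : ℝ} {c : ENNReal} (hc : ∀ i, μ (closedBall (x i) s) ≤ c) :
    μ {ω | infDist ω (Set.range x) ≤ s} ≤ Fintype.card ι * c :=
  calc μ {ω | infDist ω (Set.range x) ≤ s}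
      ≤ ∑ i, μ (closedBall (x i) s) :=
        (measure_mono (setOf_infDist_range_le_subset_iUnion_closedBall x s)).trans
          (measure_iUnion_fintype_le μ _)
    _ ≤ ∑ _ : ι, c := Finset.sum_le_sum fun i _ => hc i
    _ = Fintype.card ι * c := by rw [Finset.sum_const, Finset.card_univ, nsmul_eq_mul]

end UnionBound

theorem eventually_mul_exp_neg_le_exp_neg_half {N : ℕ → ℝ} (hN : ∀ d, 0 < N d)
    (hlog : Tendsto (fun d : ℕ => Real.log (N d) / d) atTop (𝓝 0)) {c : ℝ} (hc : 0 < c) :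
    ∀ᶠ d : ℕ in atTop, N d * Real.exp (-c * d) ≤ Real.exp (-(c / 2) * d) := by
  filter_upwards [hlog.eventually_lt_const (half_pos hc), eventually_gt_atTop 0] with d hd hd0
  have hd0' : (0 : ℝ) < d := Nat.cast_pos.mpr hd0
  have : Real.log (N d) < c / 2 * d := (div_lt_iff₀ hd0').mp hd
  rw [← Real.exp_log (hN d), ← Real.exp_add, Real.exp_le_exp]
  linarith

theorem eventually_exp_neg_mul_lt {c : ℝ} (hc : 0 < c) {t : ℝ} (ht : 0 < t) :
    ∀ᶠ d : ℕ in atTop, Real.exp (-c * d) < t := by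
  have hlin : Tendsto (fun d : ℕ => c * d) atTop atTop :=
    tendsto_natCast_atTop_atTop.const_mul_atTop hc
  simpa only [Function.comp_def, neg_mul] using
    (Real.tendsto_exp_neg_atTop_nhds_zero.comp hlin).eventually_lt_const ht

theorem tendsto_measure_setOf_of_eventually_forall {X : ℕ → Type*} [∀ d, MeasurableSpace (X d)]
    (ν : ∀ d, Measure (X d)) [∀ d, IsProbabilityMeasure (ν d)] {P : ∀ d, X d → Prop}
    (hP : ∀ᶠ d in atTop, ∀ x, P d x) :
    Tendsto (fun d => ν d {x | P d x}) atTop (𝓝 1) :=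
  tendsto_const_nhds.congr' <| hP.mono fun d hd => by
    simp [hd]

theorem empty_space_paradox_lower_general
    (Ω : ℕ → Type*) [∀ d, MetricSpace (Ω d)] [∀ d, MeasurableSpace (Ω d)]
    [∀ d, BorelSpace (Ω d)]
    (μ : ∀ d, Measure (Ω d)) [∀ d, IsProbabilityMeasure (μ d)]
    (a : ℝ) (ha : 0 < a)
    (hconc : ∀ d : ℕ, ∀ ε : ℝ, 0 < ε → ∀ A : Set (Ω d), MeasurableSet A →
      1/2 ≤ μ d A →
      μ d (Metric.thickening ε A)ᶜ ≤ ENNReal.ofReal (Real.exp (-a * ε ^ 2 * d)))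
    (R : ∀ d, Ω d → ℝ)
    (hmed1 : ∀ d x, 1/2 ≤ μ d {y | R d x ≤ dist x y})
    (η : ℕ → ℝ) (hη : Tendsto η atTop (nhds 0))
    (hR : ∀ d x, |R d x - 1| ≤ η d)
    (n : ℕ → ℕ) (hn1 : ∀ d, 1 ≤ n d)
    (hn : Tendsto (fun d : ℕ => Real.log (n d) / d) atTop (nhds 0)) :
    ∀ ε : ℝ, 0 < ε →
      ∃ b : ℝ, 0 < b ∧
        Tendsto
          (fun d : ℕ => (Measure.pi fun _ : Fin (n d) => μ d)
            {x : Fin (n d) → Ω d |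
              μ d {ω | Metric.infDist ω (Set.range x) ≤ 1 - ε}
                  ≤ ENNReal.ofReal (Real.exp (-b * ε ^ 2 * d)) ∧
              μ d {ω | Metric.infDist ω (Set.range x) ≤ 1 - ε} < 1/2})
          atTop (nhds 1) := by
  intro ε hε
  have hc : 0 < a * (ε / 2) ^ 2 := by positivity
  refine ⟨a / 8, by positivity, tendsto_measure_setOf_of_eventually_forall _ ?_⟩
  filter_upwards [hη.eventually_lt_const (half_pos hε),
    eventually_mul_exp_neg_le_exp_neg_half (fun d => Nat.cast_pos.mpr (hn1 d)) hn hc,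
    eventually_exp_neg_mul_lt (half_pos hc) one_half_pos] with d hηd hunion hhalf x
  have hexp₁ : -(a * (ε / 2) ^ 2) * (d : ℝ) = -a * (ε / 2) ^ 2 * d := by ring
  have hexp₂ : -(a * (ε / 2) ^ 2 / 2) * (d : ℝ) = -(a / 8) * ε ^ 2 * d := by ring
  rw [hexp₁, hexp₂] at hunion
  rw [hexp₂] at hhalf
  have : Nonempty (Fin (n d)) := ⟨⟨0, hn1 d⟩⟩
  have hball : ∀ i, μ d (closedBall (x i) (1 - ε))
      ≤ ENNReal.ofReal (Real.exp (-a * (ε / 2) ^ 2 * d)) := fun i => by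
    have hRx : 1 - ε ≤ R d (x i) - ε / 2 := by linarith [(abs_le.mp (hR d (x i))).1]
    exact (measure_mono (closedBall_subset_closedBall hRx)).trans <|
      measure_closedBall_le_of_concentration (μ d) (hconc d (ε / 2) (half_pos hε)) (x i)
        (hmed1 d (x i))
  have hbound : μ d {ω | infDist ω (Set.range x) ≤ 1 - ε}
      ≤ ENNReal.ofReal (Real.exp (-(a / 8) * ε ^ 2 * d)) := by
    refine (measure_setOf_infDist_range_le_le (μ d) x hball).trans ?_
    rw [Fintype.card_fin, ← ENNReal.ofReal_natCast, ← ENNReal.ofReal_mul (by positivity)]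
    exact ENNReal.ofReal_le_ofReal hunion
  refine ⟨hbound, hbound.trans_lt ?_⟩
  exact ((ENNReal.ofReal_lt_ofReal_iff one_half_pos).mpr hhalf).trans_eq (by simp)

/-- Empty space paradox, lower bound direction: under gaussian concentration,
medians of distance functions uniformly `1 + o(1)`, and i.i.d. samples of
size `n_d` with `log n_d = o(d)`, for every `ε > 0` there is `b > 0` such
that, with probability tending to `1`, the set of query points within
distance `1 - ε` of the dataset has measure at most `exp(-b ε² d)`; in
particular (second conjunct) it has measure `< 1/2`, so the median
nearest-neighbour distance is `≥ 1 - ε` eventually, i.e. `liminf ε_M ≥ 1`. -/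
theorem empty_space_paradox_lower
    (Ω : ℕ → Type*) [∀ d, MetricSpace (Ω d)] [∀ d, MeasurableSpace (Ω d)]
    [∀ d, BorelSpace (Ω d)]
    (μ : ∀ d, Measure (Ω d)) [∀ d, IsProbabilityMeasure (μ d)]
    (a : ℝ) (ha : 0 < a)
    (hconc : ∀ d : ℕ, ∀ ε : ℝ, 0 < ε → ∀ A : Set (Ω d), MeasurableSet A →
      1/2 ≤ μ d A →
      μ d (Metric.thickening ε A)ᶜ ≤ ENNReal.ofReal (Real.exp (-a * ε ^ 2 * d)))
    (R : ∀ d, Ω d → ℝ)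
    (hmed1 : ∀ d x, 1/2 ≤ μ d {y | R d x ≤ dist x y})
    (hmed2 : ∀ d x, 1/2 ≤ μ d {y | dist x y ≤ R d x})
    (η : ℕ → ℝ) (hη : Tendsto η atTop (nhds 0))
    (hR : ∀ d x, |R d x - 1| ≤ η d)
    (n : ℕ → ℕ) (hn1 : ∀ d, 1 ≤ n d)
    (hn : Tendsto (fun d : ℕ => Real.log (n d) / d) atTop (nhds 0)) :
    ∀ ε : ℝ, 0 < ε →
      ∃ b : ℝ, 0 < b ∧
        Tendsto
          (fun d : ℕ => (Measure.pi fun _ : Fin (n d) => μ d)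
            {x : Fin (n d) → Ω d |
              μ d {ω | Metric.infDist ω (Set.range x) ≤ 1 - ε}
                  ≤ ENNReal.ofReal (Real.exp (-b * ε ^ 2 * d)) ∧
              μ d {ω | Metric.infDist ω (Set.range x) ≤ 1 - ε} < 1/2})
          atTop (nhds 1) :=
  empty_space_paradox_lower_general Ω μ a ha hconc R hmed1 η hη hR n hn1 hn
end

section
/- (Geodesic descent for nearest-neighbour search via Delaunay structure) Let Ω be a geodesic metric space (every two points joined by a shortest path), X ⊆ Ω finite, and q ∈ Ω. If x ∈ X is not a nearest neighbour of q in X, then there exists a point p on a geodesic from x to q and a datapoint y ∈ X with d(p, y) ≤ d(p, x) (p lies in the Voronoi cell boundary/another cell), and moreover there exists y ∈ X whose Voronoi cell intersects the closure of the Voronoi cell of x and with d(q, y) < d(q, x). -/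
/-!
Walk along a geodesic `γ` from `x` to `q`. It starts in the closed Voronoi cell `V(x)` and ends
outside it, so it leaves `V(x)` for good at some last time `T`. Every later time lies in one of the
finitely many sets `{t | d(γ t, z) < d(γ t, x)}`, so `T` lies in the closure of one of them; then
`γ T ∈ V(x) ∩ V(z)`. Since `γ` is a shortest path, a point of it closer to `z` than to `x` makes `z`
strictly closer to `q` than `x` is.
-/

/-- A metric space is geodesic if every two points are joined by a shortest
(isometric) path. -/
def IsGeodesicSpace (Ω : Type*) [MetricSpace Ω] : Prop :=
  ∀ x y : Ω, ∃ γ : ℝ → Ω, γ 0 = x ∧ γ (dist x y) = y ∧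
    ∀ s ∈ Set.Icc (0 : ℝ) (dist x y), ∀ t ∈ Set.Icc (0 : ℝ) (dist x y),
      dist (γ s) (γ t) = |s - t|

/-- The (closed) Voronoi cell of `x ∈ X`. -/
def VorCell {Ω : Type*} [MetricSpace Ω] (X : Finset Ω) (x : Ω) : Set Ω :=
  {ω | ∀ y ∈ X, dist ω x ≤ dist ω y}

open Set

section Voronoi

variable {Ω : Type*} [MetricSpace Ω] {X : Finset Ω} {x z ω : Ω}

theorem isClosed_setOf_dist_le_dist (y x : Ω) : IsClosed {ω | dist ω y ≤ dist ω x} :=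
  isClosed_le (continuous_id.dist continuous_const) (continuous_id.dist continuous_const)

theorem isClosed_vorCell (X : Finset Ω) (x : Ω) : IsClosed (VorCell X x) := by
  simp only [VorCell, ofPred_forall]
  exact isClosed_biInter fun y _ => isClosed_setOf_dist_le_dist x y

theorem self_mem_vorCell (X : Finset Ω) (x : Ω) : x ∈ VorCell X x := fun y _ => by
  simp only [dist_self, dist_nonneg]

theorem notMem_vorCell_iff : ω ∉ VorCell X x ↔ ∃ y ∈ X, dist ω y < dist ω x := by
  simp only [VorCell, mem_ofPred_eq, not_forall, not_le, exists_prop]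

theorem mem_vorCell_of_dist_le (hω : ω ∈ VorCell X x) (hz : dist ω z ≤ dist ω x) :
    ω ∈ VorCell X z := fun y hy => hz.trans (hω y hy)

theorem exists_mem_vorCell_inter_of_continuousOn {γ : ℝ → Ω} {a b : ℝ}
    (hγ : ContinuousOn γ (Icc a b)) (hab : a ≤ b)
    (ha : γ a ∈ VorCell X x) (hb : γ b ∉ VorCell X x) :
    ∃ t ∈ Icc a b, ∃ z ∈ X, γ t ∈ VorCell X x ∩ VorCell X z ∧
      ∃ s ∈ Icc a b, dist (γ s) z < dist (γ s) x := by
  set S := Icc a b ∩ γ ⁻¹' VorCell X x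
  have hS : IsClosed S := hγ.preimage_isClosed_of_isClosed isClosed_Icc (isClosed_vorCell X x)
  have hbdd : BddAbove S := ⟨b, fun t ht => ht.1.2⟩
  have hT : sSup S ∈ S := hS.csSup_mem ⟨a, ⟨le_rfl, hab⟩, ha⟩ hbdd
  set T := sSup S
  have hTb : T ≠ b := fun h => hb (h ▸ hT.2)
  set B : Ω → Set ℝ := fun z => Icc a b ∩ {t | dist (γ t) z < dist (γ t) x}
  have hcover : Ioc T b ⊆ ⋃ z ∈ X, B z := by
    intro t ht
    have htab : t ∈ Icc a b := ⟨hT.1.1.trans ht.1.le, ht.2⟩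
    have htS : t ∉ S := fun h => (le_csSup hbdd h).not_gt ht.1
    obtain ⟨z, hzX, hz⟩ := notMem_vorCell_iff.mp fun h => htS ⟨htab, h⟩
    exact mem_biUnion hzX ⟨htab, hz⟩
  have hTcl : T ∈ ⋃ z ∈ X, closure (B z) := by
    rw [← Finset.closure_biUnion]
    exact closure_mono hcover (by rw [closure_Ioc hTb]; exact ⟨le_rfl, hT.1.2⟩)
  obtain ⟨z, hzX, hTz⟩ := mem_iUnion₂.mp hTcl
  have hclosed : IsClosed (Icc a b ∩ γ ⁻¹' {ω | dist ω z ≤ dist ω x}) :=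
    hγ.preimage_isClosed_of_isClosed isClosed_Icc (isClosed_setOf_dist_le_dist z x)
  have hsub : B z ⊆ Icc a b ∩ γ ⁻¹' {ω | dist ω z ≤ dist ω x} := fun t ht =>
    ⟨ht.1, show dist (γ t) z ≤ dist (γ t) x from le_of_lt ht.2⟩
  have hTle : dist (γ T) z ≤ dist (γ T) x := (closure_minimal hsub hclosed hTz).2
  obtain ⟨s, hs, hsz⟩ := closure_nonempty_iff.mp ⟨T, hTz⟩
  exact ⟨T, hT.1, z, hzX, ⟨hT.2, mem_vorCell_of_dist_le hT.2 hTle⟩, s, hs, hsz⟩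

end Voronoi

section Geodesic

variable {Ω : Type*} [MetricSpace Ω]

theorem dist_lt_of_dist_add_dist_eq {x p q z : Ω} (hp : dist x p + dist p q = dist x q)
    (hz : dist p z < dist p x) : dist q z < dist q x :=
  calc dist q z ≤ dist q p + dist p z := dist_triangle q p z
    _ < dist q p + dist p x := by gcongr
    _ = dist q x := by rw [dist_comm q p, dist_comm p x, dist_comm q x, ← hp, add_comm]

variable {γ : ℝ → Ω} {L : ℝ}
  (hiso : ∀ s ∈ Icc 0 L, ∀ t ∈ Icc 0 L, dist (γ s) (γ t) = |s - t|)
include hiso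

theorem continuousOn_of_dist_eq_abs_sub : ContinuousOn γ (Icc 0 L) :=
  (LipschitzOnWith.of_dist_le' (K := 1) fun s hs t ht => by
    rw [hiso s hs t ht, one_mul, Real.dist_eq]).continuousOn

theorem dist_add_dist_eq_of_dist_eq_abs_sub {s : ℝ} (hs : s ∈ Icc 0 L) :
    dist (γ 0) (γ s) + dist (γ s) (γ L) = dist (γ 0) (γ L) := by
  have h0 : (0 : ℝ) ∈ Icc 0 L := ⟨le_rfl, hs.1.trans hs.2⟩
  have hL : L ∈ Icc 0 L := ⟨h0.2, le_rfl⟩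
  rw [hiso 0 h0 s hs, hiso s hs L hL, hiso 0 h0 L hL, abs_of_nonpos (by linarith [hs.1]),
    abs_of_nonpos (by linarith [hs.2]), abs_of_nonpos (by linarith [hs.1, hs.2])]
  ring

end Geodesic

theorem geodesic_descent_general {Ω : Type*} [MetricSpace Ω] (hgeo : IsGeodesicSpace Ω)
    (X : Finset Ω) (q x : Ω)
    (hnotNN : ¬ ∀ y ∈ X, dist q x ≤ dist q y) :
    (∃ γ : ℝ → Ω, γ 0 = x ∧ γ (dist x q) = q ∧
      (∀ s ∈ Set.Icc (0 : ℝ) (dist x q), ∀ t ∈ Set.Icc (0 : ℝ) (dist x q),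
        dist (γ s) (γ t) = |s - t|) ∧
      ∃ t ∈ Set.Icc (0 : ℝ) (dist x q), ∃ y ∈ X, y ≠ x ∧
        dist (γ t) y ≤ dist (γ t) x) ∧
    ∃ y ∈ X, y ≠ x ∧ (VorCell X x ∩ VorCell X y).Nonempty ∧
      dist q y < dist q x := by
  have hq : q ∉ VorCell X x := hnotNN
  obtain ⟨w, hwX, hw⟩ := notMem_vorCell_iff.mp hq
  obtain ⟨γ, h0, hL, hiso⟩ := hgeo x q
  have hLmem : dist x q ∈ Icc 0 (dist x q) := ⟨dist_nonneg, le_rfl⟩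
  refine ⟨⟨γ, h0, hL, hiso, dist x q, hLmem, w, hwX, ?_, by rw [hL]; exact hw.le⟩, ?_⟩
  · rintro rfl
    exact hw.false
  obtain ⟨t, -, z, hzX, hp, s, hs, hsz⟩ :=
    exists_mem_vorCell_inter_of_continuousOn (x := x) (continuousOn_of_dist_eq_abs_sub hiso)
      dist_nonneg (by rw [h0]; exact self_mem_vorCell X x) (by rwa [hL])
  have hbetween := dist_add_dist_eq_of_dist_eq_abs_sub hiso hs
  rw [h0, hL] at hbetween
  exact ⟨z, hzX, by rintro rfl; exact hsz.false, ⟨γ t, hp⟩, dist_lt_of_dist_add_dist_eq hbetween hsz⟩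

/-- Geodesic descent: if `x ∈ X` is not a nearest neighbour of `q`, then along
a geodesic from `x` to `q` there is a point `p` and a datapoint `y ≠ x` with
`d(p, y) ≤ d(p, x)`; moreover some `y ∈ X` that is Delaunay-adjacent to `x`
(its closed Voronoi cell meets that of `x`) is strictly closer to `q`. -/
theorem geodesic_descent {Ω : Type*} [MetricSpace Ω] (hgeo : IsGeodesicSpace Ω)
    (X : Finset Ω) (q x : Ω) (hx : x ∈ X)
    (hnotNN : ¬ ∀ y ∈ X, dist q x ≤ dist q y) :
    (∃ γ : ℝ → Ω, γ 0 = x ∧ γ (dist x q) = q ∧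
      (∀ s ∈ Set.Icc (0 : ℝ) (dist x q), ∀ t ∈ Set.Icc (0 : ℝ) (dist x q),
        dist (γ s) (γ t) = |s - t|) ∧
      ∃ t ∈ Set.Icc (0 : ℝ) (dist x q), ∃ y ∈ X, y ≠ x ∧
        dist (γ t) y ≤ dist (γ t) x) ∧
    ∃ y ∈ X, y ≠ x ∧ (VorCell X x ∩ VorCell X y).Nonempty ∧
      dist q y < dist q x :=
  geodesic_descent_general hgeo X q x hnotNN
end
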